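/- Let p ∈ [1,∞] and let p' be its conjugate exponent (1/p + 1/p' = 1). There exist constants 0 < c ≤ C, depending only on d and p, such that for every nonnegative measurable function g : ℝ^d → [0,∞): c·|||g|||*_p ≤ sup { ∫_{ℝ^d} f(x) g(x) dx : f : ℝ^d → [0,∞) measurable with |||f|||_{p'} ≤ 1 } ≤ C·|||g|||*_p. -/

import Mathlib

/-!
Both inequalities hold with `c = C = 1`. Splitting `∫ f g` over the cubes and applying Hölder's
inequality on each cube bounds it by `Σ_z ‖f‖_{L^{p'}(D_z)} ‖g‖_{L^p(D_z)} ≤ |||g|||*_p`.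
Conversely, on a finite measure space the `L^p` norm of `g ≥ 0` is the supremum of `∫ f g` over
nonnegative `f` in the unit ball of `L^{p'}`: take `f = 1` if `p = 1`, a normalized indicator of a
level set `{g > τ}` if `p = ∞`, and `f ∝ g^{p-1}` if `1 < p < ∞` (after truncating `g` when
`‖g‖_p = ∞`). The constraint `|||f|||_{p'} ≤ 1` acts on each cube separately, so nearly optimal
choices on the cubes glue to a single admissible `f`, and summing over the cubes gives
`|||g|||*_p ≤ sup`.
-/

open MeasureTheory ENNReal

noncomputable section

/-- The half-open unit cube centered at the lattice point `z`. -/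
def unitCube (d : ℕ) (z : Fin d → ℤ) : Set (EuclideanSpace ℝ (Fin d)) :=
  {x | ∀ i, (z i : ℝ) - 1/2 ≤ x i ∧ x i < (z i : ℝ) + 1/2}

/-- The localized norm `|||f|||_p := sup_{z ∈ ℤ^d} ‖f·1_{D_z}‖_{L^p}`. -/
def locNorm (d : ℕ) (p : ℝ≥0∞) (f : EuclideanSpace ℝ (Fin d) → ℝ) : ℝ≥0∞ :=
  ⨆ z : Fin d → ℤ, eLpNorm ((unitCube d z).indicator f) p volume

/-- The localized norm `|||f|||*_p := Σ_{z ∈ ℤ^d} ‖f·1_{D_z}‖_{L^p}`. -/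
def locNormStar (d : ℕ) (p : ℝ≥0∞) (f : EuclideanSpace ℝ (Fin d) → ℝ) : ℝ≥0∞ :=
  ∑' z : Fin d → ℤ, eLpNorm ((unitCube d z).indicator f) p volume

open Filter

theorem ENNReal.tsum_iSup_le_iSup_tsum {α : Type*} {κ : α → Type*} [∀ a, Nonempty (κ a)]
    (f : ∀ a, κ a → ℝ≥0∞) : ∑' a, ⨆ i, f a i ≤ ⨆ i : (∀ a, κ a), ∑' a, f a (i a) := by
  classical
  have hsup (a : α) : ⨆ i, f a i = ⨆ i : (∀ a, κ a), f a (i a) :=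
    le_antisymm
      (iSup_le fun k => le_iSup_of_le (Function.update (fun _ => Classical.arbitrary _) a k)
        (by simp))
      (iSup_le fun i => le_iSup _ (i a))
  have hdir (i j : ∀ a, κ a) : ∃ k : ∀ a, κ a, ∀ a, f a (i a) ≤ f a (k a) ∧ f a (j a) ≤ f a (k a) :=
    ⟨fun a => if f a (i a) ≤ f a (j a) then j a else i a, fun a => by
      dsimp only
      split_ifs with h
      exacts [⟨h, le_rfl⟩, ⟨le_rfl, (not_le.mp h).le⟩]⟩
  rw [ENNReal.tsum_eq_iSup_sum]
  refine iSup_le fun s => ?_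
  calc ∑ a ∈ s, ⨆ i, f a i = ⨆ i : (∀ a, κ a), ∑ a ∈ s, f a (i a) := by
        simp_rw [hsup]
        exact ENNReal.finsetSum_iSup hdir
    _ ≤ ⨆ i : (∀ a, κ a), ∑' a, f a (i a) := iSup_mono fun i => ENNReal.sum_le_tsum s

namespace MeasureTheory

variable {α : Type*} [MeasurableSpace α] {μ : Measure α} {p q : ℝ≥0∞} {f g : α → ℝ}

theorem lintegral_ofReal_mul_le_eLpNorm_mul_eLpNorm [HolderConjugate p q]
    (hf : AEStronglyMeasurable f μ) (hg : AEStronglyMeasurable g μ) :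
    ∫⁻ x, ENNReal.ofReal (f x * g x) ∂μ ≤ eLpNorm f p μ * eLpNorm g q μ :=
  calc ∫⁻ x, ENNReal.ofReal (f x * g x) ∂μ ≤ eLpNorm (fun x => f x * g x) 1 μ := by
        rw [eLpNorm_one_eq_lintegral_enorm]
        exact lintegral_mono fun x => Real.ofReal_le_enorm _
    _ ≤ eLpNorm f p μ * eLpNorm g q μ := by
        simpa using eLpNorm_le_eLpNorm_mul_eLpNorm_of_nnnorm hf hg (· * ·) 1
          (.of_forall fun x => by simp [nnnorm_mul])

def nonnegDualNorm (q : ℝ≥0∞) (μ : Measure α) (g : α → ℝ) : ℝ≥0∞ :=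
  ⨆ f : {f : α → ℝ // Measurable f ∧ 0 ≤ f ∧ eLpNorm f q μ ≤ 1},
    ∫⁻ x, ENNReal.ofReal (f.1 x * g x) ∂μ

theorem lintegral_le_nonnegDualNorm (hf : Measurable f) (hf0 : 0 ≤ f)
    (hfq : eLpNorm f q μ ≤ 1) :
    ∫⁻ x, ENNReal.ofReal (f x * g x) ∂μ ≤ nonnegDualNorm q μ g :=
  le_iSup_of_le ⟨f, hf, hf0, hfq⟩ le_rfl

theorem nonnegDualNorm_mono {h : α → ℝ} (hgh : g ≤ h) :
    nonnegDualNorm q μ g ≤ nonnegDualNorm q μ h :=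
  iSup_mono fun f => lintegral_mono fun x =>
    ofReal_le_ofReal (mul_le_mul_of_nonneg_left (hgh x) (f.2.2.1 x))

theorem eLpNorm_one_le_nonnegDualNorm_top (hg0 : 0 ≤ g) :
    eLpNorm g 1 μ ≤ nonnegDualNorm ∞ μ g :=
  calc eLpNorm g 1 μ = ∫⁻ x, ENNReal.ofReal (1 * g x) ∂μ := by
        simp [eLpNorm_one_eq_lintegral_enorm, Real.enorm_eq_ofReal (hg0 _)]
    _ ≤ nonnegDualNorm ∞ μ g :=
        lintegral_le_nonnegDualNorm measurable_const (fun _ => zero_le_one)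
          (eLpNormEssSup_le_of_ae_enorm_bound (.of_forall fun _ => by simp))

theorem eLpNorm_top_le_nonnegDualNorm_one [IsFiniteMeasure μ] (hg : Measurable g)
    (hg0 : 0 ≤ g) : eLpNorm g ∞ μ ≤ nonnegDualNorm 1 μ g := by
  refine le_of_forall_lt fun b hb => ?_
  obtain ⟨τ, hbτ, hτ⟩ := exists_between hb
  set S := {x | τ < ENNReal.ofReal (g x)}
  have hSm : MeasurableSet S := measurableSet_lt measurable_const hg.ennreal_ofReal
  have hS0 : μ S ≠ 0 := fun h => hτ.not_ge <| eLpNormEssSup_le_of_ae_enorm_bound <|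
    (measure_eq_zero_iff_ae_notMem.mp h).mono fun x hx => by
      simpa [S, Real.enorm_eq_ofReal (hg0 x)] using hx
  have hSt : μ S ≠ ∞ := measure_ne_top μ S
  have hinv : ENNReal.ofReal (μ S).toReal⁻¹ = (μ S)⁻¹ := by
    rw [ENNReal.ofReal_inv_of_pos (ENNReal.toReal_pos hS0 hSt), ENNReal.ofReal_toReal hSt]
  set f := S.indicator fun _ => (μ S).toReal⁻¹
  have hf0 : 0 ≤ f := Set.indicator_nonneg fun _ _ => by positivity
  have hf1 : eLpNorm f 1 μ = 1 := by
    rw [eLpNorm_indicator_const hSm one_ne_zero one_ne_top, Real.enorm_eq_ofReal (by positivity),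
      hinv, toReal_one, div_one, rpow_one, ENNReal.inv_mul_cancel hS0 hSt]
  have hτf : τ ≤ ∫⁻ x, ENNReal.ofReal (f x * g x) ∂μ :=
    calc τ = ∫⁻ x in S, (μ S)⁻¹ * τ ∂μ := by
          rw [setLIntegral_const, mul_comm, ← mul_assoc, ENNReal.mul_inv_cancel hS0 hSt, one_mul]
      _ ≤ ∫⁻ x in S, ENNReal.ofReal (f x * g x) ∂μ := by
          refine setLIntegral_mono' hSm fun x hx => ?_
          rw [show f x = (μ S).toReal⁻¹ from Set.indicator_of_mem hx _,
            ENNReal.ofReal_mul (by positivity), hinv]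
          exact mul_le_mul_right hx.le _
      _ ≤ ∫⁻ x, ENNReal.ofReal (f x * g x) ∂μ := setLIntegral_le_lintegral _ _
  exact hbτ.trans_le <| hτf.trans <|
    lintegral_le_nonnegDualNorm (measurable_const.indicator hSm) hf0 hf1.le

theorem eLpNorm_le_nonnegDualNorm_of_ne_top [HolderConjugate p q] (hp1 : 1 < p) (hp : p ≠ ∞)
    (hg : Measurable g) (hg0 : 0 ≤ g) (hgp : eLpNorm g p μ ≠ ∞) :
    eLpNorm g p μ ≤ nonnegDualNorm q μ g := by
  set N := eLpNorm g p μ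
  obtain hN0 | hN0 := eq_or_ne N 0
  · simp [hN0]
  set r := p.toReal
  have hr1 : 1 < r := by simpa using (ENNReal.toReal_lt_toReal one_ne_top hp).mpr hp1
  have hq : q ≠ ∞ := fun h => hp1.ne' ((HolderConjugate.eq_top_iff_eq_one q p).mp h)
  have hqr : q * ENNReal.ofReal (r - 1) = p := by
    rw [← ENNReal.ofReal_toReal hq, ← ENNReal.ofReal_mul toReal_nonneg, mul_comm,
      (HolderConjugate.toReal hr1 (q := q)).sub_one_mul_conj, ENNReal.ofReal_toReal hp]
  have hNr : N ^ r = N ^ (r - 1) * N := by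
    conv_lhs => rw [← sub_add_cancel r 1]
    rw [ENNReal.rpow_add _ _ hN0 hgp, ENNReal.rpow_one]
  have hNr0 : N ^ (r - 1) ≠ 0 := (ENNReal.rpow_pos (pos_iff_ne_zero.mpr hN0) hgp).ne'
  have hNrt : N ^ (r - 1) ≠ ∞ := ENNReal.rpow_ne_top_of_nonneg (by linarith) hgp
  -- `f = g^(p-1) / ‖g‖_p^(p-1)` is the equality case of Hölder's inequality.
  set c : ℝ := ((N ^ (r - 1))⁻¹).toReal
  have hc : ‖c‖ₑ = (N ^ (r - 1))⁻¹ := by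
    rw [Real.enorm_eq_ofReal toReal_nonneg, ENNReal.ofReal_toReal (ENNReal.inv_ne_top.mpr hNr0)]
  set f : α → ℝ := c • fun x => ‖g x‖ ^ (r - 1)
  have hfq : eLpNorm f q μ = 1 := by
    rw [eLpNorm_const_smul, eLpNorm_norm_rpow _ (by linarith), hqr, hc,
      ENNReal.inv_mul_cancel hNr0 hNrt]
  have hfg : ∫⁻ x, ENNReal.ofReal (f x * g x) ∂μ = N := by
    calc ∫⁻ x, ENNReal.ofReal (f x * g x) ∂μ = ∫⁻ x, ‖c‖ₑ * ‖g x‖ₑ ^ r ∂μ := by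
          refine lintegral_congr fun x => ?_
          rw [Real.enorm_eq_ofReal toReal_nonneg, Real.enorm_eq_ofReal (hg0 x),
            ENNReal.ofReal_rpow_of_nonneg (hg0 x) (by linarith), ← ENNReal.ofReal_mul toReal_nonneg]
          congr 1
          rw [show f x = c * g x ^ (r - 1) by simp [f, abs_of_nonneg (hg0 x)], mul_assoc,
            ← Real.rpow_add_one' (hg0 x) (by linarith), sub_add_cancel]
      _ = (N ^ (r - 1))⁻¹ * N ^ r := by
          rw [lintegral_const_mul' _ _ enorm_ne_top, hc,
            lintegral_rpow_enorm_eq_rpow_eLpNorm' (by linarith),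
            ← eLpNorm_eq_eLpNorm' (HolderConjugate.ne_zero p q) hp]
      _ = N := by rw [hNr, ← mul_assoc, ENNReal.inv_mul_cancel hNr0 hNrt, one_mul]
  exact hfg ▸ lintegral_le_nonnegDualNorm (measurable_const.mul (hg.norm.pow_const _))
    (fun x => by simp only [f, Pi.smul_apply, smul_eq_mul]; positivity) hfq.le

theorem eLpNorm_le_nonnegDualNorm [IsFiniteMeasure μ] [HolderConjugate p q] (hg : Measurable g)
    (hg0 : 0 ≤ g) : eLpNorm g p μ ≤ nonnegDualNorm q μ g := by
  obtain rfl | hp1 := (HolderConjugate.one_le p q).eq_or_lt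
  · obtain rfl : q = ∞ := (HolderConjugate.eq_top_iff_eq_one q 1).mpr rfl
    exact eLpNorm_one_le_nonnegDualNorm_top hg0
  obtain rfl | hp := eq_or_ne p ∞
  · obtain rfl : q = 1 := (HolderConjugate.eq_top_iff_eq_one ∞ q).mp rfl
    exact eLpNorm_top_le_nonnegDualNorm_one hg hg0
  have hgn (n : ℕ) : Measurable fun x => min (g x) n := hg.min measurable_const
  refine Lp.eLpNorm_le_of_ae_tendsto (u := atTop) (.of_forall fun n => ?_)
    (fun n => (hgn n).aestronglyMeasurable) (.of_forall fun x =>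
      tendsto_atTop_of_eventually_const (i₀ := ⌈g x⌉₊) fun n hn => min_eq_left (Nat.ceil_le.mp hn))
  have hgn_bdd : ∀ x, ‖min (g x) n‖ ≤ n := fun x => by
    rw [Real.norm_of_nonneg (le_min (hg0 x) n.cast_nonneg)]
    exact min_le_right _ _
  calc eLpNorm (fun x => min (g x) n) p μ ≤ nonnegDualNorm q μ (fun x => min (g x) n) :=
        eLpNorm_le_nonnegDualNorm_of_ne_top hp1 hp (hgn n) (fun x => le_min (hg0 x) n.cast_nonneg)
          (MemLp.of_bound (hgn n).aestronglyMeasurable n (.of_forall hgn_bdd)).eLpNorm_ne_top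
    _ ≤ nonnegDualNorm q μ g := nonnegDualNorm_mono fun x => min_le_left _ _

end MeasureTheory

section UnitCube

variable {d : ℕ} {z : Fin d → ℤ}

def cubeIndex (x : EuclideanSpace ℝ (Fin d)) : Fin d → ℤ := fun i => ⌊x i + 1/2⌋

theorem mem_unitCube_iff_cubeIndex_eq {x : EuclideanSpace ℝ (Fin d)} :
    x ∈ unitCube d z ↔ cubeIndex x = z := by
  simp only [unitCube, Set.mem_ofPred_eq, cubeIndex, funext_iff, Int.floor_eq_iff]
  refine forall_congr' fun i => ?_
  constructor <;> rintro ⟨h₁, h₂⟩ <;> constructor <;> linarith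

theorem measurable_cubeIndex : Measurable (cubeIndex (d := d)) := by
  unfold cubeIndex
  fun_prop

theorem unitCube_eq_preimage_cubeIndex : unitCube d = fun z => cubeIndex ⁻¹' {z} :=
  funext fun _ => Set.ext fun _ => mem_unitCube_iff_cubeIndex_eq

theorem measurableSet_unitCube : MeasurableSet (unitCube d z) := by
  rw [unitCube_eq_preimage_cubeIndex]
  exact measurable_cubeIndex (measurableSet_singleton z)

theorem unitCube_eq_preimage_pi_Ico (z : Fin d → ℤ) :
    unitCube d z = (MeasurableEquiv.toLp 2 (Fin d → ℝ)).symm ⁻¹'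
      (Set.univ.pi fun i => Set.Ico ((z i : ℝ) - 1/2) ((z i : ℝ) + 1/2)) := by
  ext x
  simp [unitCube, Set.mem_pi, Set.mem_Ico]

theorem volume_unitCube : volume (unitCube d z) = 1 := by
  rw [unitCube_eq_preimage_pi_Ico,
    (EuclideanSpace.volume_preserving_symm_measurableEquiv_toLp (Fin d)).measure_preimage
      ((MeasurableSet.univ_pi fun i => measurableSet_Ico).nullMeasurableSet),
    volume_pi_pi]
  simp [Real.volume_Ico, ← two_mul]

instance : IsFiniteMeasure (volume.restrict (unitCube d z)) :=
  isFiniteMeasure_restrict.mpr (by simp [volume_unitCube])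

theorem lintegral_eq_tsum_setLIntegral_unitCube (h : EuclideanSpace ℝ (Fin d) → ℝ≥0∞) :
    ∫⁻ x, h x = ∑' z, ∫⁻ x in unitCube d z, h x := by
  have hcover : ⋃ z, unitCube d z = Set.univ := by
    simp [Set.eq_univ_iff_forall, mem_unitCube_iff_cubeIndex_eq]
  have hdisj : Pairwise (Function.onFun Disjoint (unitCube d)) := by
    rw [unitCube_eq_preimage_cubeIndex]
    exact pairwise_disjoint_fiber cubeIndex
  rw [← lintegral_iUnion (fun _ => measurableSet_unitCube) hdisj, hcover, Measure.restrict_univ]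

end UnitCube

section Localized

variable {d : ℕ} {p q : ℝ≥0∞} {f g : EuclideanSpace ℝ (Fin d) → ℝ}

def cubewise (F : (Fin d → ℤ) → EuclideanSpace ℝ (Fin d) → ℝ) : EuclideanSpace ℝ (Fin d) → ℝ :=
  fun x => F (cubeIndex x) x

theorem cubewise_eq_on_unitCube (F : (Fin d → ℤ) → EuclideanSpace ℝ (Fin d) → ℝ)
    (z : Fin d → ℤ) : Set.EqOn (cubewise F) (F z) (unitCube d z) := fun x hx => by
  rw [cubewise, mem_unitCube_iff_cubeIndex_eq.mp hx]

theorem measurable_cubewise {F : (Fin d → ℤ) → EuclideanSpace ℝ (Fin d) → ℝ}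
    (hF : ∀ z, Measurable (F z)) : Measurable (cubewise F) :=
  (measurable_from_prod_countable_left (f := fun x : _ × _ => F x.2 x.1) hF).comp
    (measurable_id.prodMk measurable_cubeIndex)

theorem locNorm_cubewise (F : (Fin d → ℤ) → EuclideanSpace ℝ (Fin d) → ℝ) :
    locNorm d p (cubewise F) = ⨆ z, eLpNorm (F z) p (volume.restrict (unitCube d z)) := by
  refine iSup_congr fun z => ?_
  rw [eLpNorm_indicator_eq_eLpNorm_restrict measurableSet_unitCube]
  exact eLpNorm_congr_ae
    (ae_restrict_of_forall_mem measurableSet_unitCube (cubewise_eq_on_unitCube F z))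

theorem lintegral_ofReal_mul_le_locNormStar [HolderConjugate p q] (hf : Measurable f)
    (hf1 : locNorm d q f ≤ 1) (hg : Measurable g) :
    ∫⁻ x, ENNReal.ofReal (f x * g x) ≤ locNormStar d p g := by
  rw [lintegral_eq_tsum_setLIntegral_unitCube, locNormStar]
  refine ENNReal.tsum_le_tsum fun z => ?_
  have hfz : eLpNorm f q (volume.restrict (unitCube d z)) ≤ 1 := by
    rw [← eLpNorm_indicator_eq_eLpNorm_restrict measurableSet_unitCube]
    exact (le_iSup (fun z => eLpNorm ((unitCube d z).indicator f) q volume) z).trans hf1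
  calc ∫⁻ x in unitCube d z, ENNReal.ofReal (f x * g x)
      ≤ eLpNorm f q (volume.restrict (unitCube d z)) *
          eLpNorm g p (volume.restrict (unitCube d z)) :=
        lintegral_ofReal_mul_le_eLpNorm_mul_eLpNorm hf.aestronglyMeasurable hg.aestronglyMeasurable
    _ ≤ eLpNorm ((unitCube d z).indicator g) p volume := by
        rw [eLpNorm_indicator_eq_eLpNorm_restrict measurableSet_unitCube]
        exact mul_le_of_le_one_left' hfz

theorem tsum_setLIntegral_le_iSup_lintegral_ofReal_mul
    {F : (Fin d → ℤ) → EuclideanSpace ℝ (Fin d) → ℝ} (hF : ∀ z, Measurable (F z))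
    (hF0 : ∀ z, 0 ≤ F z) (hF1 : ∀ z, eLpNorm (F z) q (volume.restrict (unitCube d z)) ≤ 1) :
    ∑' z, ∫⁻ x in unitCube d z, ENNReal.ofReal (F z x * g x) ≤
      ⨆ f : {f : EuclideanSpace ℝ (Fin d) → ℝ // Measurable f ∧ 0 ≤ f ∧ locNorm d q f ≤ 1},
        ∫⁻ x, ENNReal.ofReal (f.1 x * g x) := by
  have hf1 : locNorm d q (cubewise F) ≤ 1 := by
    rw [locNorm_cubewise]
    exact iSup_le hF1
  calc ∑' z, ∫⁻ x in unitCube d z, ENNReal.ofReal (F z x * g x)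
      = ∫⁻ x, ENNReal.ofReal (cubewise F x * g x) := by
        rw [lintegral_eq_tsum_setLIntegral_unitCube]
        refine tsum_congr fun z => setLIntegral_congr_fun measurableSet_unitCube fun x hx => ?_
        rw [cubewise_eq_on_unitCube F z hx]
    _ ≤ _ := le_iSup_of_le
        ⟨cubewise F, measurable_cubewise hF, fun x => hF0 (cubeIndex x) x, hf1⟩ le_rfl

theorem locNormStar_le_iSup_lintegral_ofReal_mul [HolderConjugate p q] (hg : Measurable g)
    (hg0 : 0 ≤ g) :
    locNormStar d p g ≤ ⨆ f : {f : EuclideanSpace ℝ (Fin d) → ℝ //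
        Measurable f ∧ 0 ≤ f ∧ locNorm d q f ≤ 1}, ∫⁻ x, ENNReal.ofReal (f.1 x * g x) := by
  set B := fun z : Fin d → ℤ => {f : EuclideanSpace ℝ (Fin d) → ℝ //
    Measurable f ∧ 0 ≤ f ∧ eLpNorm f q (volume.restrict (unitCube d z)) ≤ 1}
  have (z : Fin d → ℤ) : Nonempty (B z) := ⟨⟨0, measurable_const, le_rfl, by simp⟩⟩
  calc locNormStar d p g = ∑' z, eLpNorm g p (volume.restrict (unitCube d z)) := by
        simp_rw [locNormStar, eLpNorm_indicator_eq_eLpNorm_restrict measurableSet_unitCube]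
    _ ≤ ∑' z, nonnegDualNorm q (volume.restrict (unitCube d z)) g :=
        ENNReal.tsum_le_tsum fun z => eLpNorm_le_nonnegDualNorm hg hg0
    _ ≤ ⨆ F : ∀ z, B z, ∑' z, ∫⁻ x in unitCube d z, ENNReal.ofReal ((F z).1 x * g x) :=
        ENNReal.tsum_iSup_le_iSup_tsum _
    _ ≤ _ := iSup_le fun F => tsum_setLIntegral_le_iSup_lintegral_ofReal_mul
        (fun z => (F z).2.1) (fun z => (F z).2.2.1) (fun z => (F z).2.2.2)

end Localized

theorem locNormStar_duality_general
    (d : ℕ) (p p' : ℝ≥0∞) (hpp' : 1/p + 1/p' = 1) :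
    ∃ c C : ℝ, 0 < c ∧ c ≤ C ∧
      ∀ g : EuclideanSpace ℝ (Fin d) → ℝ, Measurable g → 0 ≤ g →
        ENNReal.ofReal c * locNormStar d p g ≤
            (⨆ f : {f : EuclideanSpace ℝ (Fin d) → ℝ //
                Measurable f ∧ 0 ≤ f ∧ locNorm d p' f ≤ 1},
              ∫⁻ x, ENNReal.ofReal (f.1 x * g x)) ∧
        (⨆ f : {f : EuclideanSpace ℝ (Fin d) → ℝ //
            Measurable f ∧ 0 ≤ f ∧ locNorm d p' f ≤ 1},
          ∫⁻ x, ENNReal.ofReal (f.1 x * g x)) ≤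
          ENNReal.ofReal C * locNormStar d p g := by
  have : HolderConjugate p p' := holderConjugate_iff.mpr (by simpa only [one_div] using hpp')
  refine ⟨1, 1, one_pos, le_rfl, fun g hg hg0 => ?_⟩
  rw [ENNReal.ofReal_one, one_mul]
  exact ⟨locNormStar_le_iSup_lintegral_ofReal_mul hg hg0,
    iSup_le fun f => lintegral_ofReal_mul_le_locNormStar f.2.1 f.2.2.2 hg⟩

/-- Duality: up to constants depending only on `d` and `p`,
`|||g|||*_p ≍ sup { ∫ f·g : f ≥ 0 measurable, |||f|||_{p'} ≤ 1 }`. -/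
theorem locNormStar_duality
    (d : ℕ) (hd : 1 ≤ d) (p p' : ℝ≥0∞) (hp : 1 ≤ p) (hpp' : 1/p + 1/p' = 1) :
    ∃ c C : ℝ, 0 < c ∧ c ≤ C ∧
      ∀ g : EuclideanSpace ℝ (Fin d) → ℝ, Measurable g → 0 ≤ g →
        ENNReal.ofReal c * locNormStar d p g ≤
            (⨆ f : {f : EuclideanSpace ℝ (Fin d) → ℝ //
                Measurable f ∧ 0 ≤ f ∧ locNorm d p' f ≤ 1},
              ∫⁻ x, ENNReal.ofReal (f.1 x * g x)) ∧
        (⨆ f : {f : EuclideanSpace ℝ (Fin d) → ℝ //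
            Measurable f ∧ 0 ≤ f ∧ locNorm d p' f ≤ 1},
          ∫⁻ x, ENNReal.ofReal (f.1 x * g x)) ≤
          ENNReal.ofReal C * locNormStar d p g :=
  locNormStar_duality_general d p p' hpp'

end
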